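/- Let G be a finite connected loopless multigraph. The boundary map on oriented edges, e ↦ [e⁺ − e⁻], induces a group isomorphism ∂_G : ℰ(G) → Jac(G), where ℰ(G) = ℤE/(𝒞 + 𝒞*) is the quotient of the free abelian group on the oriented edges by the sum of the integral cycle space and the integral cut space. -/

import Mathlib

attribute [local instance 10] Classical.propDecidable

/-- A finite multigraph, presented by darts (oriented edges): `rev` is the
fixed-point-free involution exchanging the two darts of each edge, and
`head d` is the vertex the dart `d` points to. -/
structure Multigraph where
  V : Type
  D : Type
  fV : Fintype V
  dV : DecidableEq V
  fD : Fintype D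
  dD : DecidableEq D
  rev : D → D
  rev_invol : Function.Involutive rev
  rev_ne : ∀ d : D, rev d ≠ d
  head : D → V

attribute [instance] Multigraph.fV Multigraph.dV Multigraph.fD Multigraph.dD

namespace Multigraph

variable (G : Multigraph)

/-- The tail (starting vertex) of a dart. -/
def tail (d : G.D) : G.V := G.head (G.rev d)

/-- `G` is loopless: no edge has equal endpoints. -/
def Loopless : Prop := ∀ d : G.D, G.head d ≠ G.tail d

/-- One-step adjacency between vertices. -/
def Adj (u v : G.V) : Prop := ∃ d : G.D, G.tail d = u ∧ G.head d = v

/-- `G` is connected. -/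
def Connected : Prop := ∀ u v : G.V, Relation.ReflTransGen G.Adj u v

/-- The degree of a vertex: the number of darts with tail `v`. -/
def degree (v : G.V) : ℕ := (Finset.univ.filter fun d : G.D => G.tail d = v).card

/-- The number of edges joining `v` to `w`. -/
def mul (v w : G.V) : ℕ :=
  (Finset.univ.filter fun d : G.D => G.tail d = v ∧ G.head d = w).card

/-! ### Divisors and the sandpile group -/

/-- The total degree homomorphism on divisors. -/
def degHom : (G.V → ℤ) →+ ℤ where
  toFun x := ∑ v, x v
  map_zero' := by simp
  map_add' x y := by simp [Finset.sum_add_distrib]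

/-- Degree-zero divisors. -/
def Div0 : AddSubgroup (G.V → ℤ) := G.degHom.ker

/-- The principal divisor of a lending move at `v`: `v` loses `deg v` chips and
each other vertex `w` gains `n(v,w)` chips. -/
def prin (v : G.V) : G.V → ℤ :=
  fun w => if w = v then -(G.degree v : ℤ) else (G.mul v w : ℤ)

/-- The subgroup of `ℤV` generated by all lending moves. -/
def Prin : AddSubgroup (G.V → ℤ) := AddSubgroup.closure (Set.range G.prin)

/-- Two divisors are linearly equivalent when they differ by a sequence of
lending moves. -/
def LinEquiv (D D' : G.V → ℤ) : Prop := D' - D ∈ G.Prin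

/-- The sandpile group (Jacobian) of `G`: degree-zero divisors modulo
linear equivalence. -/
def Jac := G.Div0 ⧸ (G.Prin.addSubgroupOf G.Div0)

instance : AddCommGroup G.Jac :=
  inferInstanceAs (AddCommGroup (G.Div0 ⧸ (G.Prin.addSubgroupOf G.Div0)))

/-- The divisor class of a degree-zero divisor in the sandpile group. -/
def divClass (D : G.Div0) : G.Jac := QuotientAddGroup.mk D

/-- The divisor `a - b` for vertices `a`, `b`. -/
def unitDivFun (a b : G.V) : G.V → ℤ :=
  fun w => (if w = a then 1 else 0) - (if w = b then 1 else 0)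

lemma unitDivFun_mem (a b : G.V) : G.unitDivFun a b ∈ G.Div0 := by
  simp [Div0, degHom, AddMonoidHom.mem_ker, unitDivFun, Finset.sum_sub_distrib]

/-- The divisor `a - b` as a degree-zero divisor. -/
def unitDiv (a b : G.V) : G.Div0 := ⟨G.unitDivFun a b, G.unitDivFun_mem a b⟩

/-- The class `[a - b] ∈ Jac(G)`. -/
def unitClass (a b : G.V) : G.Jac := G.divClass (G.unitDiv a b)

/-- The boundary of a dart: `∂ d = [d⁺ - d⁻] ∈ Jac(G)`. -/
def dartBoundary (d : G.D) : G.Jac := G.unitClass (G.head d) (G.tail d)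

/-! ### The group ℤE of formal sums of oriented edges -/

/-- `ℤE`: functions on darts that are antisymmetric under reversal;
this is the free abelian group on the oriented edges, with `-e` identified
with the oppositely oriented edge. -/
def EdgeGroup : AddSubgroup (G.D → ℤ) where
  carrier := {x | ∀ d, x (G.rev d) = -x d}
  add_mem' := by
    intro a b ha hb d
    simp only [Pi.add_apply, ha d, hb d]
    ring
  zero_mem' := by intro d; simp
  neg_mem' := by
    intro a ha d
    simp only [Pi.neg_apply, ha d]

/-- The element of `ℤE` corresponding to a single oriented edge (dart). -/
def dartVec (d : G.D) : G.D → ℤ :=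
  fun d' => if d' = d then 1 else if d' = G.rev d then -1 else 0

lemma dartVec_mem (d : G.D) : G.dartVec d ∈ G.EdgeGroup := by
  have hinj := G.rev_invol.injective
  intro d'
  unfold dartVec
  rcases eq_or_ne d' d with rfl | h1
  · simp [G.rev_ne d']
  · rcases eq_or_ne d' (G.rev d) with rfl | h2
    · simp [G.rev_invol d, G.rev_ne d]
    · have h3 : G.rev d' ≠ d := fun h => h2 (by rw [← h, G.rev_invol])
      have h4 : G.rev d' ≠ G.rev d := fun h => h1 (hinj h)
      simp [h1, h2, h3, h4]

/-- The vector of a list of darts (e.g. of a directed cycle). -/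
def listVec (l : List G.D) : G.D → ℤ := (l.map G.dartVec).sum

/-- `l` is a directed cycle: a nonempty closed walk of darts through
pairwise distinct vertices. -/
def IsDirCycle (l : List G.D) : Prop :=
  l ≠ [] ∧ l.Chain' (fun a b => G.head a = G.tail b) ∧
    (∀ a ∈ l.getLast?, ∀ b ∈ l.head?, G.head a = G.tail b) ∧
    (l.map G.tail).Nodup

/-- The integral cycle space `𝒞 ⊆ ℤE`. -/
def CycleSpace : AddSubgroup (G.D → ℤ) :=
  AddSubgroup.closure {x | ∃ l : List G.D, G.IsDirCycle l ∧ x = G.listVec l}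

/-- The cut determined by a set `U` of vertices, directed out of `U`. -/
def cutVec (U : Finset G.V) : G.D → ℤ := fun d =>
  if G.tail d ∈ U ∧ G.head d ∉ U then 1
  else if G.head d ∈ U ∧ G.tail d ∉ U then -1 else 0

/-- The integral cut space `𝒞* ⊆ ℤE`. -/
def CutSpace : AddSubgroup (G.D → ℤ) :=
  AddSubgroup.closure (Set.range G.cutVec)

/-- `ℰ(G) = ℤE / (𝒞 + 𝒞*)`. -/
def EGroup :=
  G.EdgeGroup ⧸ ((G.CycleSpace ⊔ G.CutSpace).addSubgroupOf G.EdgeGroup)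

instance : AddCommGroup G.EGroup :=
  inferInstanceAs
    (AddCommGroup (G.EdgeGroup ⧸ ((G.CycleSpace ⊔ G.CutSpace).addSubgroupOf G.EdgeGroup)))

/-- The class of an oriented edge in `ℰ(G)`. -/
def eClass (d : G.D) : G.EGroup :=
  QuotientAddGroup.mk ⟨G.dartVec d, G.dartVec_mem d⟩

/-- The boundary map `ℤE → ℤV`, sending an oriented edge `e` to `e⁺ - e⁻`
(when restricted to `ℤE ⊆ (D → ℤ)`). -/
def bMap : (G.D → ℤ) →+ (G.V → ℤ) where
  toFun x := fun v => ∑ d ∈ Finset.univ.filter (fun d => G.head d = v), x d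
  map_zero' := by funext v; simp
  map_add' x y := by funext v; simp [Finset.sum_add_distrib]

/-! ### Spanning trees -/

/-- Adjacency using only darts in `T`. -/
def treeAdj (T : Finset G.D) (u v : G.V) : Prop :=
  ∃ d ∈ T, G.tail d = u ∧ G.head d = v

/-- `T` (a reversal-closed set of darts) is a spanning tree: it is connected,
meets every vertex, and has exactly `|V| - 1` edges (hence is acyclic). -/
def IsSpanningTree (T : Finset G.D) : Prop :=
  (∀ d ∈ T, G.rev d ∈ T) ∧
    (∀ u v : G.V, Relation.ReflTransGen (G.treeAdj T) u v) ∧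
    T.card = 2 * (Fintype.card G.V - 1)

/-- The reversal involution as a permutation of darts. -/
def revPerm : Equiv.Perm G.D := Function.Involutive.toPerm G.rev G.rev_invol

end Multigraph

/-- A ribbon graph: a multigraph together with, at each vertex, a cyclic
ordering of the incident edges (darts).  `next d` is the dart following `d`
in the cyclic order at the tail of `d`. -/
structure RibbonGraph extends Multigraph where
  next : Equiv.Perm toMultigraph.D
  next_tail : ∀ d : toMultigraph.D, toMultigraph.tail (next d) = toMultigraph.tail d
  next_cyclic : ∀ d d' : toMultigraph.D,
    toMultigraph.tail d = toMultigraph.tail d' → next.SameCycle d d'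

namespace RibbonGraph

variable (G : RibbonGraph)

/-- The face permutation of a ribbon graph; its orbits are the faces of the
associated surface embedding (the orbit of a dart `d` is the face to the left
of `d`, when the cyclic orders are taken clockwise). -/
def facePerm : Equiv.Perm G.D := G.next * G.revPerm

/-- Darts lie in the same face when they are in the same orbit of the face
permutation. -/
def faceSetoid : Setoid G.D :=
  ⟨G.facePerm.SameCycle,
    ⟨fun x => Equiv.Perm.SameCycle.refl _ x, fun h => h.symm, fun h h' => h.trans h'⟩⟩

/-- The faces of the surface embedding determined by the ribbon structure. -/
def Faces := Quotient G.faceSetoid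

instance : Fintype G.Faces :=
  @Quotient.fintype _ _ G.faceSetoid
    (fun a b => inferInstanceAs (Decidable (G.facePerm.SameCycle a b)))

/-- The face to the left of a dart. -/
def leftFace (d : G.D) : G.Faces := Quotient.mk G.faceSetoid d

/-- The face to the right of a dart. -/
def rightFace (d : G.D) : G.Faces := G.leftFace (G.rev d)

/-- `G` is a planar ribbon graph: the surface it embeds in has genus `0`,
i.e. Euler's formula `|V| - |E| + |F| = 2` holds. -/
def IsPlanar : Prop :=
  Fintype.card G.V + Fintype.card G.Faces = Fintype.card G.D / 2 + 2

/-! ### Rotor-routing -/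

/-- A rotor configuration with basepoint `q`: a choice, for each vertex
`v ≠ q`, of a dart with tail `v`. -/
def RotorConfig (q : G.V) :=
  {ρ : (v : G.V) → v ≠ q → G.D // ∀ (v : G.V) (h : v ≠ q), G.tail (ρ v h) = v}

/-- Firing the vertex `v ≠ q` in a state (chip configuration, rotor
configuration): the rotor at `v` advances to the next dart in the cyclic
order at `v`, and one chip moves from `v` to the head of the new rotor. -/
def fire (q : G.V) (v : G.V) (hv : v ≠ q) (s : (G.V → ℤ) × G.RotorConfig q) :
    (G.V → ℤ) × G.RotorConfig q :=
  ((fun w => s.1 w - (if w = v then 1 else 0) +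
      (if w = G.head (G.next (s.2.1 v hv)) then 1 else 0)),
   ⟨fun u hu => if u = v then G.next (s.2.1 v hv) else s.2.1 u hu, by
      intro u hu
      by_cases h : u = v
      · simp only [if_pos h]
        rw [G.next_tail, s.2.2 v hv, h]
      · simp only [if_neg h]
        exact s.2.2 u hu⟩)

/-- A single legal rotor-routing step: fire some vertex `v ≠ q` carrying at
least one chip. -/
def Step (q : G.V) (s s' : (G.V → ℤ) × G.RotorConfig q) : Prop :=
  ∃ (v : G.V) (hv : v ≠ q), 1 ≤ s.1 v ∧ s' = G.fire q v hv s

/-- A state is terminal when no vertex other than `q` can be fired. -/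
def Terminal (q : G.V) (s : (G.V → ℤ) × G.RotorConfig q) : Prop :=
  ∀ v : G.V, v ≠ q → s.1 v ≤ 0

/-- `ρ` is the rotor configuration obtained by orienting the spanning tree
`T` towards the root `q`: every rotor is a dart of `T`, and following the
rotors from any vertex leads to `q`. -/
def TowardRoot (q : G.V) (T : Finset G.D) (ρ : G.RotorConfig q) : Prop :=
  ∀ (v : G.V) (h : v ≠ q), ρ.1 v h ∈ T ∧
    Relation.ReflTransGen (fun a b => ∃ ha : a ≠ q, G.head (ρ.1 a ha) = b) v q

/-- The rotor-routing process started from a representative of `x` that is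
nonnegative away from `q` and from the rotor configuration of `T` oriented
towards `q` terminates at the rotor configuration of `T'` oriented towards
`q`. -/
def ActsTo (q : G.V) (x : G.Jac) (T T' : Finset G.D) : Prop :=
  ∃ D : G.Div0, G.divClass D = x ∧ (∀ v : G.V, v ≠ q → 0 ≤ (D : G.V → ℤ) v) ∧
    ∃ (ρ ρ' : G.RotorConfig q) (c' : G.V → ℤ),
      G.TowardRoot q T ρ ∧ G.TowardRoot q T' ρ' ∧
      Relation.ReflTransGen (G.Step q) ((D : G.V → ℤ), ρ) (c', ρ') ∧
      G.Terminal q (c', ρ')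

/-- The rotor-routing action of the sandpile group element `x` on the
spanning tree `T`, with basepoint `q`. -/
noncomputable def rotorAction (q : G.V) (x : G.Jac) (T : Finset G.D) :
    Finset G.D :=
  if h : ∃ T' : Finset G.D, G.IsSpanningTree T' ∧ G.ActsTo q x T T' then
    h.choose
  else T

/-! ### Angles -/

/-- The angle `∠ᵘ(d, d')` between two darts with the same tail `u`:
if `d = e₀, e₁, …, e_k = d'` are the consecutive darts in the cyclic order
at `u`, the angle is `∑_{i=1}^{k} ∂ eᵢ ∈ Jac(G)`. -/
noncomputable def dartAngle (d d' : G.D) : G.Jac :=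
  if h : ∃ k : ℕ, (⇑G.next)^[k] d = d' then
    ∑ i ∈ Finset.range (Nat.find h), G.dartBoundary ((⇑G.next)^[i + 1] d)
  else 0

/-- The angle `∠_v(T, T')` between two spanning trees `T, T'` based at `v`:
the sum over all vertices `u ≠ v` of the angles between the rotors of `T`
and of `T'` at `u` (both oriented towards `v`). -/
noncomputable def treeAngle (v : G.V) (T T' : Finset G.D) : G.Jac :=
  if h : ∃ p : G.RotorConfig v × G.RotorConfig v,
      G.TowardRoot v T p.1 ∧ G.TowardRoot v T' p.2 then
    ∑ u : G.V,
      if hu : u = v then 0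
      else G.dartAngle (h.choose.1.1 u hu) (h.choose.2.1 u hu)
  else 0


/-! ### The planar dual ribbon graph -/

/-- The dual ribbon graph `G*` of a ribbon graph `G`: its vertices are the
faces of `G`, its darts are the darts of `G`, where the dart `d`, viewed in
the dual, crosses `d` from the face after `d` (its right, its dual tail) to
the face before `d` (its left, its dual head), and the cyclic orders at the
faces are the counter-clockwise ones. -/
noncomputable def dual : RibbonGraph where
  V := G.Faces
  D := G.D
  fV := inferInstance
  dV := Classical.decEq _
  fD := G.fD
  dD := G.dD
  rev := G.rev
  rev_invol := G.rev_invol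
  rev_ne := G.rev_ne
  head := fun d => G.leftFace d
  next := G.revPerm * G.facePerm * G.revPerm
  next_tail := by
    intro d
    show G.leftFace (G.rev (G.rev (G.facePerm (G.rev d)))) = G.leftFace (G.rev d)
    rw [G.rev_invol]
    exact Quotient.sound ⟨-1, by simp⟩
  next_cyclic := by
    intro d d' h
    have h1 : G.facePerm.SameCycle (G.rev d) (G.rev d') := Quotient.exact h
    have h2 := h1.conj (g := G.revPerm)
    have hR : G.revPerm⁻¹ = G.revPerm := by
      rw [Equiv.Perm.inv_def]
      exact Function.Involutive.toPerm_symm G.rev_invol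
    rw [hR] at h2
    have e1 : G.revPerm (G.rev d) = d := G.rev_invol d
    have e2 : G.revPerm (G.rev d') = d' := G.rev_invol d'
    rw [e1, e2] at h2
    exact h2


end RibbonGraph

/-!
The boundary map `∂ : ℤE → Div⁰(G)` is onto because `G` is connected, and it kills every
directed cycle by telescoping. The cut of a single vertex `v` is the star of darts leaving `v`;
as `G` is loopless its boundary is exactly the lending move at `v`, so `∂` maps `𝒞*` onto the
principal divisors. Conversely, an element of `ℤE` with zero boundary is a flow, and flows
decompose into directed cycles: following darts of positive value must close up into a cycle,
and subtracting that cycle lowers the `ℓ¹`-norm. Hence `∂⁻¹(Prin) ∩ ℤE = 𝒞 + 𝒞*`, and the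
first isomorphism theorem identifies `ℰ(G)` with `Jac(G)`.
-/

theorem Function.exists_mem_periodicPts {α : Type*} [Finite α] [Nonempty α] (f : α → α) :
    ∃ x, x ∈ Function.periodicPts f := by
  obtain ⟨x⟩ := ‹Nonempty α›
  obtain ⟨m, n, hne, heq⟩ := Finite.exists_ne_map_eq_of_infinite fun n : ℕ => f^[n] x
  wlog hmn : m < n generalizing m n
  · exact this n m hne.symm heq.symm (by omega)
  refine ⟨f^[m] x, Function.mk_mem_periodicPts (by omega : 0 < n - m) ?_⟩
  change f^[n - m] (f^[m] x) = f^[m] x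
  rw [← Function.iterate_add_apply, Nat.sub_add_cancel hmn.le]
  exact heq.symm

namespace Multigraph

variable (G : Multigraph)

lemma head_rev (d : G.D) : G.head (G.rev d) = G.tail d := rfl

lemma tail_rev (d : G.D) : G.tail (G.rev d) = G.head d := by
  rw [tail, G.rev_invol]

lemma dartVec_apply (d e : G.D) :
    G.dartVec d e = (if e = d then 1 else 0) - (if e = G.rev d then 1 else 0) := by
  unfold dartVec
  by_cases h₁ : e = d
  · simp [h₁, (G.rev_ne d).symm]
  · by_cases h₂ : e = G.rev d <;> simp [h₁, h₂, G.rev_ne d]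

lemma unitDivFun_add (a b c : G.V) :
    G.unitDivFun a b + G.unitDivFun b c = G.unitDivFun a c := by
  funext w
  simp only [Pi.add_apply, unitDivFun]
  ring

lemma unitDivFun_self (a : G.V) : G.unitDivFun a a = 0 := by
  funext w
  simp [unitDivFun]

lemma bMap_dartVec (d : G.D) :
    G.bMap (G.dartVec d) = G.unitDivFun (G.head d) (G.tail d) := by
  funext v
  simp only [bMap, AddMonoidHom.coe_mk, ZeroHom.coe_mk, dartVec_apply, Finset.sum_sub_distrib,
    Finset.sum_ite_eq', Finset.mem_filter, Finset.mem_univ, true_and, unitDivFun]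
  simp only [tail]
  congr 1 <;> exact if_congr eq_comm rfl rfl

lemma bMap_mem_div0 {x : G.D → ℤ} (hx : x ∈ G.EdgeGroup) : G.bMap x ∈ G.Div0 := by
  have hsum : ∑ d, x d = 0 := by
    have hrev : ∑ d, x (G.rev d) = ∑ d, x d := Fintype.sum_equiv G.revPerm _ _ fun _ => rfl
    simp only [show ∀ d, x (G.rev d) = -x d from hx, Finset.sum_neg_distrib] at hrev
    omega
  change ∑ v, ∑ d ∈ Finset.univ.filter (fun d => G.head d = v), x d = 0
  rw [Finset.sum_fiberwise_of_maps_to fun d _ => Finset.mem_univ (G.head d), hsum]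

lemma listVec_cons (d : G.D) (l : List G.D) :
    G.listVec (d :: l) = G.dartVec d + G.listVec l := by
  simp [listVec]

lemma listVec_mem_edgeGroup (l : List G.D) : G.listVec l ∈ G.EdgeGroup := by
  induction l with
  | nil => exact G.EdgeGroup.zero_mem
  | cons d l ih => rw [listVec_cons]; exact add_mem (G.dartVec_mem d) ih

lemma listVec_apply (l : List G.D) (d : G.D) :
    G.listVec l d = l.count d - l.count (G.rev d) := by
  induction l with
  | nil => simp [listVec]
  | cons e l ih =>
    have hrev : e = G.rev d ↔ d = G.rev e :=
      ⟨fun h => h ▸ (G.rev_invol d).symm, fun h => h ▸ (G.rev_invol e).symm⟩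
    simp only [listVec_cons, Pi.add_apply, ih, dartVec_apply, List.count_cons, beq_iff_eq]
    push_cast
    rw [if_congr hrev rfl rfl]
    simp only [eq_comm (a := e)]
    ring

lemma bMap_listVec_of_isChain (d : G.D) (l : List G.D)
    (hl : (d :: l).IsChain fun a b => G.head a = G.tail b) :
    G.bMap (G.listVec (d :: l)) = G.unitDivFun (G.head (l.getLastD d)) (G.tail d) := by
  induction l generalizing d with
  | nil => simp [listVec, bMap_dartVec]
  | cons e l ih =>
    obtain ⟨hde, hl⟩ := List.isChain_cons_cons.mp hl
    rw [listVec_cons, map_add, ih e hl, bMap_dartVec, List.getLastD_cons, ← hde, add_comm,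
      unitDivFun_add]

lemma bMap_listVec_of_isDirCycle {l : List G.D} (hl : G.IsDirCycle l) :
    G.bMap (G.listVec l) = 0 := by
  obtain ⟨hne, hchain, hclose, -⟩ := hl
  obtain ⟨d, l, rfl⟩ := List.exists_cons_of_ne_nil hne
  rw [G.bMap_listVec_of_isChain d l hchain,
    hclose (l.getLastD d) (by simp [List.getLast?_cons]) d rfl, unitDivFun_self]

lemma cycleSpace_le_ker : G.CycleSpace ≤ G.bMap.ker := by
  rw [CycleSpace, AddSubgroup.closure_le]
  rintro _ ⟨l, hl, rfl⟩
  exact G.bMap_listVec_of_isDirCycle hl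

lemma exists_isDirCycle_of_forall_exists_next (S : G.D → Prop)
    (hS : ∀ d, S d → ∃ d', S d' ∧ G.tail d' = G.head d) {d₀ : G.D} (hd₀ : S d₀) :
    ∃ l, G.IsDirCycle l ∧ ∀ d ∈ l, S d := by
  -- Walk on the vertices where some dart of `S` starts; a periodic orbit of the walk visits
  -- pairwise distinct vertices.
  let W := {v : G.V // ∃ d, S d ∧ G.tail d = v}
  choose out hout_S hout_tail using fun w : W => w.2
  let next : W → W := fun w => ⟨G.head (out w), (hS _ (hout_S w)).imp fun _ h => h⟩
  have : Nonempty W := ⟨⟨_, d₀, hd₀, rfl⟩⟩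
  obtain ⟨w, hw⟩ := Function.exists_mem_periodicPts next
  set p := Function.minimalPeriod next w
  have hp : 0 < p := Function.minimalPeriod_pos_of_mem_periodicPts hw
  have hstep : ∀ k, G.head (out (next^[k] w)) = G.tail (out (next^[k + 1] w)) := fun k => by
    rw [hout_tail, Function.iterate_succ_apply']
  refine ⟨(List.range p).map fun k => out (next^[k] w), ⟨?_, ?_, ?_, ?_⟩, ?_⟩
  · simp [hp.ne']
  · refine List.isChain_iff_getElem.mpr fun k hk => ?_
    simp [hstep]
  · intro a ha b hb
    obtain ⟨q, hq⟩ := Nat.exists_eq_add_one_of_ne_zero hp.ne'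
    simp only [List.getLast?_eq_getElem?, List.head?_eq_getElem?, List.length_map,
      List.length_range, hq, add_tsub_cancel_right, List.getElem?_map, List.getElem?_range,
      Nat.lt_add_one, Nat.zero_lt_succ, Option.map_some, Option.mem_def,
      Option.some.injEq] at ha hb
    rw [← ha, ← hb, hstep, ← hq, Function.iterate_minimalPeriod, Function.iterate_zero_apply]
  · simp only [List.map_map]
    refine List.nodup_range.map_on fun i hi j hj hij => ?_
    simp only [Function.comp_apply, hout_tail, Subtype.val_inj] at hij
    exact Function.iterate_injOn_Iio_minimalPeriod (List.mem_range.mp hi) (List.mem_range.mp hj)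
      hij
  · simp [hout_S]

lemma exists_tail_eq_head_pos {x : G.D → ℤ} (hx : x ∈ G.EdgeGroup) (h0 : G.bMap x = 0)
    {d : G.D} (hd : 0 < x d) : ∃ d', 0 < x d' ∧ G.tail d' = G.head d := by
  have hsum : ∑ e ∈ Finset.univ.filter (fun e => G.head e = G.head d), x e = 0 :=
    congrFun h0 (G.head d)
  obtain ⟨e, he, hxe⟩ : ∃ e ∈ Finset.univ.filter (fun e => G.head e = G.head d), x e < 0 := by
    by_contra! h
    have := Finset.sum_pos' h ⟨d, by simp, hd⟩
    omega
  simp only [Finset.mem_filter, Finset.mem_univ, true_and] at he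
  refine ⟨G.rev e, ?_, by rw [tail_rev, he]⟩
  rw [show x (G.rev e) = -x e from hx e]
  omega

lemma sum_natAbs_sub_listVec_lt {x : G.D → ℤ} (hx : x ∈ G.EdgeGroup) {l : List G.D}
    (hl : G.IsDirCycle l) (hpos : ∀ d ∈ l, 0 < x d) :
    ∑ d, (x d - G.listVec l d).natAbs < ∑ d, (x d).natAbs := by
  have hnd : l.Nodup := hl.2.2.2.of_map _
  have hrev : ∀ d, G.rev d ∈ l → x d < 0 := fun d hd => by
    have := hpos _ hd
    rw [show x (G.rev d) = -x d from hx d] at this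
    omega
  have hval : ∀ d, G.listVec l d =
      (if d ∈ l then 1 else 0) - (if G.rev d ∈ l then 1 else 0) := fun d => by
    rw [listVec_apply]
    congr 1 <;> split_ifs with h <;> simp [List.count_eq_one_of_mem hnd, List.count_eq_zero, h]
  have hlt : ∀ d ∈ l, (x d - G.listVec l d).natAbs < (x d).natAbs := fun d hd => by
    have := hpos d hd
    have : G.rev d ∉ l := fun h => by linarith [hrev d h]
    simp only [hval, hd, this, if_true, if_false]
    omega
  apply Finset.sum_lt_sum
  · intro d _
    by_cases h₁ : d ∈ l
    · exact (hlt d h₁).le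
    by_cases h₂ : G.rev d ∈ l
    · have := hrev d h₂
      simp only [hval, h₁, h₂, if_true, if_false]
      omega
    · simp [hval, h₁, h₂]
  · obtain ⟨d, hd⟩ := List.exists_mem_of_ne_nil l hl.1
    exact ⟨d, Finset.mem_univ d, hlt d hd⟩

theorem mem_cycleSpace_of_bMap_eq_zero {x : G.D → ℤ} (hx : x ∈ G.EdgeGroup)
    (h0 : G.bMap x = 0) : x ∈ G.CycleSpace := by
  induction hN : ∑ d, (x d).natAbs using Nat.strong_induction_on generalizing x with
  | _ N ih =>
  by_cases hpos : ∃ d, 0 < x d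
  · obtain ⟨d₀, hd₀⟩ := hpos
    obtain ⟨l, hl, hlpos⟩ := G.exists_isDirCycle_of_forall_exists_next (fun d => 0 < x d)
      (fun _ hd => G.exists_tail_eq_head_pos hx h0 hd) hd₀
    have hcycle : G.listVec l ∈ G.CycleSpace := AddSubgroup.subset_closure ⟨l, hl, rfl⟩
    have hrest : x - G.listVec l ∈ G.CycleSpace :=
      ih _ (hN ▸ G.sum_natAbs_sub_listVec_lt hx hl hlpos)
        (sub_mem hx (G.listVec_mem_edgeGroup l))
        (by rw [map_sub, h0, G.bMap_listVec_of_isDirCycle hl, sub_zero]) rfl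
    simpa using add_mem hrest hcycle
  · simp only [not_exists, not_lt] at hpos
    have : x = 0 := funext fun d => by
      have := hpos (G.rev d)
      rw [show x (G.rev d) = -x d from hx d] at this
      exact le_antisymm (hpos d) (by simp only [Pi.zero_apply]; omega)
    exact this ▸ zero_mem _

lemma cutVec_apply (U : Finset G.V) (d : G.D) :
    G.cutVec U d = (if G.tail d ∈ U then 1 else 0) - (if G.head d ∈ U then 1 else 0) := by
  unfold cutVec
  by_cases h₁ : G.tail d ∈ U <;> by_cases h₂ : G.head d ∈ U <;> simp [h₁, h₂]

lemma cutSpace_le_edgeGroup : G.CutSpace ≤ G.EdgeGroup := by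
  rw [CutSpace, AddSubgroup.closure_le]
  rintro _ ⟨U, rfl⟩ d
  simp only [cutVec_apply, tail_rev, head_rev, neg_sub]
  congr

lemma cutVec_eq_sum_singleton (U : Finset G.V) : G.cutVec U = ∑ v ∈ U, G.cutVec {v} := by
  funext d
  simp only [Finset.sum_apply, cutVec_apply, Finset.mem_singleton, Finset.sum_sub_distrib,
    Finset.sum_ite_eq]

lemma cutVec_singleton (v : G.V) :
    G.cutVec {v} = ∑ e ∈ Finset.univ.filter (fun e => G.tail e = v), G.dartVec e := by
  funext d
  have hrev : ∀ e, d = G.rev e ↔ e = G.rev d :=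
    fun e => ⟨fun h => h ▸ (G.rev_invol e).symm, fun h => h ▸ (G.rev_invol d).symm⟩
  simp only [Finset.sum_apply, cutVec_apply, dartVec_apply, Finset.mem_singleton,
    Finset.sum_sub_distrib, hrev, Finset.sum_ite_eq, Finset.sum_ite_eq', Finset.mem_filter,
    Finset.mem_univ, true_and, tail_rev]

lemma bMap_cutVec_singleton (hloop : G.Loopless) (v : G.V) :
    G.bMap (G.cutVec {v}) = G.prin v := by
  funext w
  rw [cutVec_singleton, map_sum]
  simp only [bMap_dartVec, Finset.sum_apply, unitDivFun]
  rw [Finset.sum_congr rfl fun e he => by rw [(Finset.mem_filter.mp he).2],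
    Finset.sum_sub_distrib, Finset.sum_boole, Finset.filter_filter]
  unfold prin
  split_ifs with h
  · subst h
    have hnone : (Finset.univ.filter fun e : G.D => G.tail e = w ∧ w = G.head e) = ∅ :=
      Finset.filter_false_of_mem fun e _ ⟨h₁, h₂⟩ => hloop e (h₂.symm.trans h₁.symm)
    simp [hnone, degree]
  · simp only [Finset.sum_const_zero, sub_zero, mul]
    congr 2
    ext e
    simp [eq_comm]

theorem map_bMap_cutSpace (hloop : G.Loopless) : G.CutSpace.map G.bMap = G.Prin := by
  rw [CutSpace, AddMonoidHom.map_closure, Prin]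
  apply le_antisymm
  · rw [AddSubgroup.closure_le]
    rintro _ ⟨_, ⟨U, rfl⟩, rfl⟩
    rw [cutVec_eq_sum_singleton, map_sum]
    exact sum_mem fun v _ => by
      rw [G.bMap_cutVec_singleton hloop]
      exact AddSubgroup.subset_closure ⟨v, rfl⟩
  · rw [AddSubgroup.closure_le]
    rintro _ ⟨v, rfl⟩
    exact AddSubgroup.subset_closure ⟨_, ⟨{v}, rfl⟩, G.bMap_cutVec_singleton hloop v⟩

theorem mem_cycleSpace_sup_cutSpace_iff (hloop : G.Loopless) {x : G.D → ℤ}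
    (hx : x ∈ G.EdgeGroup) : x ∈ G.CycleSpace ⊔ G.CutSpace ↔ G.bMap x ∈ G.Prin := by
  rw [← G.map_bMap_cutSpace hloop]
  constructor
  · intro h
    obtain ⟨y, hy, z, hz, rfl⟩ := AddSubgroup.mem_sup.mp h
    refine ⟨z, hz, ?_⟩
    rw [map_add, G.cycleSpace_le_ker hy, zero_add]
  · rintro ⟨z, hz, hzx⟩
    have hcycle : x - z ∈ G.CycleSpace :=
      G.mem_cycleSpace_of_bMap_eq_zero (sub_mem hx (G.cutSpace_le_edgeGroup hz))
        (by rw [map_sub, hzx, sub_self])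
    simpa using add_mem (AddSubgroup.mem_sup_left hcycle) (AddSubgroup.mem_sup_right hz)

lemma unitDivFun_mem_map_edgeGroup (hconn : G.Connected) (a b : G.V) :
    G.unitDivFun a b ∈ G.EdgeGroup.map G.bMap := by
  induction hconn b a with
  | refl => simp [unitDivFun_self]
  | @tail c a _ hca ih =>
    obtain ⟨d, rfl, rfl⟩ := hca
    rw [← G.unitDivFun_add _ (G.tail d) b]
    exact add_mem ⟨G.dartVec d, G.dartVec_mem d, G.bMap_dartVec d⟩ ih

theorem div0_le_map_edgeGroup (hconn : G.Connected) : G.Div0 ≤ G.EdgeGroup.map G.bMap := by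
  intro f hf
  rcases isEmpty_or_nonempty G.V with hV | ⟨⟨v₀⟩⟩
  · simp [Subsingleton.elim f 0]
  have hsum : ∑ v, f v = 0 := hf
  have hf_eq : f = ∑ v, f v • G.unitDivFun v v₀ := by
    funext w
    simp only [Finset.sum_apply, Pi.smul_apply, unitDivFun, smul_eq_mul, mul_sub, mul_ite,
      mul_one, mul_zero, Finset.sum_sub_distrib, Finset.sum_ite_eq]
    by_cases h : w = v₀ <;> simp [h, hsum]
  rw [hf_eq]
  exact sum_mem fun v _ => zsmul_mem (G.unitDivFun_mem_map_edgeGroup hconn v v₀) _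

def boundaryHom : G.EdgeGroup →+ G.Jac :=
  (QuotientAddGroup.mk' _).comp
    ((G.bMap.comp G.EdgeGroup.subtype).codRestrict G.Div0 fun x => G.bMap_mem_div0 x.2)

lemma boundaryHom_eq_zero_iff (x : G.EdgeGroup) :
    G.boundaryHom x = 0 ↔ G.bMap x ∈ G.Prin :=
  (QuotientAddGroup.eq_zero_iff _).trans AddSubgroup.mem_addSubgroupOf

theorem ker_boundaryHom (hloop : G.Loopless) :
    G.boundaryHom.ker = (G.CycleSpace ⊔ G.CutSpace).addSubgroupOf G.EdgeGroup := by
  ext x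
  rw [AddMonoidHom.mem_ker, boundaryHom_eq_zero_iff, AddSubgroup.mem_addSubgroupOf,
    G.mem_cycleSpace_sup_cutSpace_iff hloop x.2]

theorem boundaryHom_surjective (hconn : G.Connected) : Function.Surjective G.boundaryHom := by
  rintro ⟨f, hf⟩
  obtain ⟨x, hx, hxf⟩ := G.div0_le_map_edgeGroup hconn hf
  exact ⟨⟨x, hx⟩, congrArg QuotientAddGroup.mk (Subtype.ext hxf)⟩

lemma boundaryHom_dartVec (d : G.D) :
    G.boundaryHom ⟨G.dartVec d, G.dartVec_mem d⟩ = G.dartBoundary d :=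
  congrArg QuotientAddGroup.mk (Subtype.ext (G.bMap_dartVec d))

end Multigraph

/-- For a finite connected loopless multigraph `G`, the boundary
map `e ↦ [e⁺ - e⁻]` induces a group isomorphism `∂_G : ℰ(G) → Jac(G)`, where
`ℰ(G) = ℤE/(𝒞 + 𝒞*)`. -/
theorem boundary_iso (G : Multigraph)
    (hconn : G.Connected) (hloop : G.Loopless) :
    ∃ ψ : G.EGroup ≃+ G.Jac, ∀ d : G.D, ψ (G.eClass d) = G.dartBoundary d :=
  ⟨(QuotientAddGroup.quotientAddEquivOfEq (G.ker_boundaryHom hloop).symm).trans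
      (QuotientAddGroup.quotientKerEquivOfSurjective _ (G.boundaryHom_surjective hconn)),
    G.boundaryHom_dartVec⟩
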